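/- arXiv:2502.07921 — 5 statements merged into one kernel-verified Lean document; each statement's English description precedes it below -/
import Mathlib

section
/- Consider the 7-periodic computation: the sequence A = 2, 3, 3, 3, 3, 2, 3, 3, 3, 3, ... over Z_7 contains no block B of consecutive elements (length ≥ 2) with (sum of B) + (product of B) = 0 in Z_7. -/
lemma sum5 (A : ℕ → ZMod 7) (hA : ∀ k, A k = if k % 5 = 0 then 2 else 3) (t : ℕ) :
    ∑ i ∈ Finset.range 5, A (t + i) = 0 := by
  have h : t % 5 = 0 ∨ t % 5 = 1 ∨ t % 5 = 2 ∨ t % 5 = 3 ∨ t % 5 = 4 := by omega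
  rcases h with h | h | h | h | h <;>
    simp [Finset.sum_range_succ, hA, Nat.add_mod, h] <;> decide

lemma prod5 (A : ℕ → ZMod 7) (hA : ∀ k, A k = if k % 5 = 0 then 2 else 3) (t : ℕ) :
    ∏ i ∈ Finset.range 5, A (t + i) = 1 := by
  have h : t % 5 = 0 ∨ t % 5 = 1 ∨ t % 5 = 2 ∨ t % 5 = 3 ∨ t % 5 = 4 := by omega
  rcases h with h | h | h | h | h <;>
    simp [Finset.prod_range_succ, hA, Nat.add_mod, h] <;> decide

theorem stmt_9 (A : ℕ → ZMod 7) (hA : ∀ k, A k = if k % 5 = 0 then 2 else 3) :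
    ∀ s l : ℕ, 2 ≤ l →
      (∑ i ∈ Finset.range l, A (s + i)) + (∏ i ∈ Finset.range l, A (s + i)) ≠ 0 := by
  intro s l
  induction l using Nat.strong_induction_on generalizing s with
  | _ l IH =>
    intro hl
    by_cases h7 : l < 7
    · have h : s % 5 = 0 ∨ s % 5 = 1 ∨ s % 5 = 2 ∨ s % 5 = 3 ∨ s % 5 = 4 := by omega
      interval_cases l <;> rcases h with h | h | h | h | h <;>
        simp [Finset.sum_range_succ, Finset.prod_range_succ, hA, Nat.add_mod, h] <;> decide
    · have h5 : l = (l - 5) + 5 := by omega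
      rw [h5, Finset.sum_range_add, Finset.prod_range_add]
      have hs : ∑ i ∈ Finset.range 5, A (s + ((l - 5) + i)) = 0 := by
        simpa [← add_assoc] using sum5 A hA (s + (l - 5))
      have hp : ∏ i ∈ Finset.range 5, A (s + ((l - 5) + i)) = 1 := by
        simpa [← add_assoc] using prod5 A hA (s + (l - 5))
      rw [hs, hp, add_zero, mul_one]
      exact IH (l - 5) (by omega) s (by omega)
end

section
/- The sequence A = 5, 3, 3, 5, 3, 3, ... over Z_11 (periodic with period (5,3,3)) contains no block B of consecutive elements of length at least 2 with (sum of B) + (product of B) = 0 in Z_11. -/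
theorem stmt_10 (A : ℕ → ZMod 11) (hA : ∀ k, A k = if k % 3 = 0 then 5 else 3) :
    ∀ s l : ℕ, 2 ≤ l →
      (∑ i ∈ Finset.range l, A (s + i)) + (∏ i ∈ Finset.range l, A (s + i)) ≠ 0 := by
  intro s l hl
  induction l using Nat.strong_induction_on with
  | _ l ih =>
    rcases Nat.lt_or_ge l 5 with h5 | h5
    · have hm := Nat.mod_lt s (show 0 < 3 by norm_num)
      interval_cases l <;> interval_cases hs : s % 3 <;>
        simp [Finset.sum_range_succ, Finset.prod_range_succ, hA, Nat.add_mod, hs] <;> decide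
    · obtain ⟨m, rfl⟩ : ∃ m, l = m + 3 := ⟨l - 3, by omega⟩
      have e1 : s + (m + 1) = s + m + 1 := by omega
      have e2 : s + (m + 2) = s + m + 2 := by omega
      have hmod := Nat.mod_lt (s + m) (show 0 < 3 by norm_num)
      have key : A (s+m) + A (s+m+1) + A (s+m+2) = 0 ∧
          A (s+m) * A (s+m+1) * A (s+m+2) = 1 := by
        interval_cases hs : (s + m) % 3 <;>
          simp [hA, Nat.add_mod, hs] <;> decide
      obtain ⟨ksum, kprod⟩ := key
      have hsum : ∑ i ∈ Finset.range (m+3), A (s+i) = ∑ i ∈ Finset.range m, A (s+i) := by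
        rw [Finset.sum_range_succ, Finset.sum_range_succ, Finset.sum_range_succ, e1, e2]
        linear_combination ksum
      have hprod : ∏ i ∈ Finset.range (m+3), A (s+i) = ∏ i ∈ Finset.range m, A (s+i) := by
        rw [Finset.prod_range_succ, Finset.prod_range_succ, Finset.prod_range_succ, e1, e2]
        linear_combination (∏ i ∈ Finset.range m, A (s+i)) * kprod
      rw [hsum, hprod]
      exact ih m (by omega) (by omega)
end

section
/- Let n = 9u for an integer u > 0. Then the periodic sequence A = 7, 4, 4, 7, 4, 4, ... over Z_n contains no block B of consecutive elements of length at least 2 with (sum of B) + (product of B) = 0 in Z_n. -/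
open Finset

private def Bz (k : ℕ) : ZMod 9 := if k % 3 = 0 then 7 else 4

private def fz (s l : ℕ) : ZMod 9 :=
  (∑ i ∈ range l, Bz (s + i)) + (∏ i ∈ range l, Bz (s + i))

private lemma Bz_mod (k : ℕ) : Bz k = Bz (k % 3) := by
  unfold Bz
  rw [Nat.mod_mod_of_dvd k dvd_rfl]

private lemma fz_mod (s l : ℕ) : fz s l = fz (s % 3) l := by
  unfold fz
  congr 1
  · apply Finset.sum_congr rfl
    intro i _
    rw [Bz_mod (s + i), Bz_mod (s % 3 + i), show (s + i) % 3 = (s % 3 + i) % 3 by omega]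
  · apply Finset.prod_congr rfl
    intro i _
    rw [Bz_mod (s + i), Bz_mod (s % 3 + i), show (s + i) % 3 = (s % 3 + i) % 3 by omega]

private lemma nine_sum (t : ℕ) : ∑ i ∈ range 9, Bz (t + i) = 0 := by
  have h : ∀ i ∈ range 9, Bz (t + i) = Bz (t % 3 + i) := by
    intro i _
    rw [Bz_mod (t + i), Bz_mod (t % 3 + i), show (t + i) % 3 = (t % 3 + i) % 3 by omega]
  rw [Finset.sum_congr rfl h]
  have ht : t % 3 < 3 := Nat.mod_lt _ (by norm_num)
  interval_cases h' : (t % 3) <;> decide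

private lemma nine_prod (t : ℕ) : ∏ i ∈ range 9, Bz (t + i) = 1 := by
  have h : ∀ i ∈ range 9, Bz (t + i) = Bz (t % 3 + i) := by
    intro i _
    rw [Bz_mod (t + i), Bz_mod (t % 3 + i), show (t + i) % 3 = (t % 3 + i) % 3 by omega]
  rw [Finset.prod_congr rfl h]
  have ht : t % 3 < 3 := Nat.mod_lt _ (by norm_num)
  interval_cases h' : (t % 3) <;> decide

private lemma fz_period (s l : ℕ) : fz s (l + 9) = fz s l := by
  unfold fz
  rw [Finset.sum_range_add, Finset.prod_range_add]
  have h1 : ∑ i ∈ range 9, Bz (s + (l + i)) = 0 := by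
    have := nine_sum (s + l)
    simpa [add_assoc] using this
  have h2 : ∏ i ∈ range 9, Bz (s + (l + i)) = 1 := by
    have := nine_prod (s + l)
    simpa [add_assoc] using this
  rw [h1, h2, add_zero, mul_one]

private lemma fz_period_mul (s m q : ℕ) : fz s (m + 9 * q) = fz s m := by
  induction q with
  | zero => simp
  | succ q ih =>
      have : m + 9 * (q + 1) = (m + 9 * q) + 9 := by ring
      rw [this, fz_period, ih]

private lemma fz_ne_zero (s l : ℕ) (hl : 2 ≤ l) : fz s l ≠ 0 := by
  obtain ⟨m, rfl⟩ := Nat.exists_eq_add_of_le hl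
  obtain ⟨q, r, hr, rfl⟩ : ∃ q r, r < 9 ∧ m = r + 9 * q :=
    ⟨m / 9, m % 9, Nat.mod_lt _ (by norm_num), by rw [Nat.mod_add_div]⟩
  rw [show 2 + (r + 9 * q) = (2 + r) + 9 * q by ring, fz_period_mul, fz_mod]
  have hs : s % 3 < 3 := Nat.mod_lt _ (by norm_num)
  interval_cases h' : (s % 3) <;> interval_cases r <;> decide

theorem stmt_14 (u : ℕ) (hu : 0 < u) (n : ℕ) (hn : n = 9 * u)
    (A : ℕ → ZMod n) (hA : ∀ k, A k = if k % 3 = 0 then 7 else 4) :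
    ∀ s l : ℕ, 2 ≤ l →
      (∑ i ∈ Finset.range l, A (s + i)) + (∏ i ∈ Finset.range l, A (s + i)) ≠ 0 := by
  intro s l hl h
  have hdvd : (9 : ℕ) ∣ n := ⟨u, hn⟩
  let φ : ZMod n →+* ZMod 9 := ZMod.castHom hdvd (ZMod 9)
  have hφA : ∀ k, φ (A k) = Bz k := by
    intro k
    rw [hA k]
    unfold Bz
    split <;> [exact map_ofNat φ 7; exact map_ofNat φ 4]
  have := congrArg φ h
  rw [map_add, map_sum, map_prod, map_zero] at this
  have h2 : fz s l = 0 := by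
    unfold fz
    rw [← this]
    congr 1
    · exact Finset.sum_congr rfl fun i _ => (hφA (s + i)).symm
    · exact Finset.prod_congr rfl fun i _ => (hφA (s + i)).symm
  exact fz_ne_zero s l hl h2
end

section
/- Let n be divisible by p·q^2 for distinct primes p and q. Then the alternating sequence A = q, -q, q, -q, ... over Z_n contains no block B of consecutive elements of length at least 2 such that (sum of B) + c·(product of B) = 0 in Z_n, for either c = 1 or c = -1. -/
theorem stmt_16 (p q : ℕ) (hp : p.Prime) (hq : q.Prime) (hpq : p ≠ q)
    (n : ℕ) (hn : p * q ^ 2 ∣ n)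
    (A : ℕ → ZMod n) (hA : ∀ k, A k = if k % 2 = 0 then (q : ZMod n) else -(q : ZMod n))
    (c : ZMod n) (hc : c = 1 ∨ c = -1) :
    ∀ s l : ℕ, 2 ≤ l →
      (∑ i ∈ Finset.range l, A (s + i)) + c * (∏ i ∈ Finset.range l, A (s + i)) ≠ 0 := by
  intro s l hl h0
  -- rewrite A in terms of integers
  have hA' : ∀ k, A k = (((-1 : ℤ) ^ k * q : ℤ) : ZMod n) := by
    intro k
    rcases Nat.even_or_odd k with he | ho
    · rw [hA, if_pos (Nat.even_iff.mp he), he.neg_one_pow]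
      push_cast; ring
    · rw [hA, if_neg (by simpa [Nat.odd_iff] using ho), ho.neg_one_pow]
      push_cast; ring
  set S : ℤ := ∑ i ∈ Finset.range l, (-1) ^ (s + i) * q with hSdef
  set P : ℤ := ∏ i ∈ Finset.range l, (-1) ^ (s + i) * q with hPdef
  have hsum : (∑ i ∈ Finset.range l, A (s + i)) = (S : ZMod n) := by
    rw [hSdef]; push_cast
    exact Finset.sum_congr rfl fun i _ => by rw [hA']; push_cast; ring
  have hprod : (∏ i ∈ Finset.range l, A (s + i)) = (P : ZMod n) := by
    rw [hPdef]; push_cast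
    exact Finset.prod_congr rfl fun i _ => by rw [hA']; push_cast; ring
  -- the integer value of c
  obtain ⟨d, hd, hcd⟩ : ∃ d : ℤ, (d = 1 ∨ d = -1) ∧ c = (d : ZMod n) := by
    rcases hc with h | h
    · exact ⟨1, Or.inl rfl, by simp [h]⟩
    · exact ⟨-1, Or.inr rfl, by simp [h]⟩
  have hdvd : ((p * q ^ 2 : ℕ) : ℤ) ∣ S + d * P := by
    have hz : ((S + d * P : ℤ) : ZMod n) = 0 := by
      push_cast
      rw [← hsum, ← hprod, ← hcd]
      exact h0
    exact dvd_trans (Int.natCast_dvd_natCast.mpr hn)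
      ((ZMod.intCast_zmod_eq_zero_iff_dvd _ _).mp hz)
  -- compute P
  set t : ℕ := ∑ i ∈ Finset.range l, (s + i) with htdef
  have hP : P = (-1) ^ t * q ^ l := by
    rw [hPdef, Finset.prod_mul_distrib, Finset.prod_pow_eq_pow_sum, Finset.prod_const,
      Finset.card_range, htdef]
  -- compute S
  have hS : S = if Even l then 0 else (-1 : ℤ) ^ s * (q : ℤ) := by
    have hS0 : S = ((-1 : ℤ) ^ s * q) * ∑ i ∈ Finset.range l, (-1 : ℤ) ^ i := by
      rw [hSdef, Finset.mul_sum]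
      exact Finset.sum_congr rfl fun i _ => by rw [pow_add]; ring
    rw [hS0, neg_one_geom_sum]
    split <;> ring
  -- the unit d * (-1)^t
  set u : ℤ := d * (-1) ^ t with hu
  have hu1 : u = 1 ∨ u = -1 := by
    rcases hd with h | h <;> rcases Nat.even_or_odd t with hth | hth <;>
      simp [hu, h, hth.neg_one_pow, Odd.neg_one_pow]
  have hval : S + d * P = S + u * q ^ l := by rw [hP, hu]; ring
  rw [hval] at hdvd
  rcases Nat.even_or_odd l with hle | hlo
  · -- even length: value = u * q^l, not divisible by p
    rw [hS, if_pos hle, zero_add] at hdvd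
    have hpd : (p : ℤ) ∣ u * q ^ l :=
      dvd_trans (by push_cast; exact Dvd.intro _ rfl) hdvd
    have hpq' : (p : ℤ) ∣ (q : ℤ) ^ l := by
      rcases hu1 with h | h
      · simpa [h] using hpd
      · rw [h] at hpd; simpa using hpd
    have hnat : p ∣ q ^ l := by exact_mod_cast hpq'
    exact hpq ((Nat.prime_dvd_prime_iff_eq hp hq).mp (hp.dvd_of_dvd_pow hnat))
  · -- odd length: value = (-1)^s * q + u * q^l, not divisible by q^2
    rw [hS, if_neg (Nat.not_even_iff_odd.mpr hlo)] at hdvd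
    have hq2 : ((q : ℤ)) ^ 2 ∣ (-1) ^ s * q + u * q ^ l :=
      dvd_trans (by push_cast; exact Dvd.intro_left _ rfl) hdvd
    obtain ⟨m, hm⟩ := Nat.exists_eq_add_of_le hl
    have hfac : (-1 : ℤ) ^ s * q + u * q ^ l = q * ((-1) ^ s + u * q ^ (1 + m)) := by
      rw [hm]; ring
    rw [hfac, pow_two] at hq2
    have hqz : (q : ℤ) ≠ 0 := by exact_mod_cast hq.ne_zero
    have hqd : (q : ℤ) ∣ (-1) ^ s + u * q ^ (1 + m) :=
      (mul_dvd_mul_iff_left hqz).mp hq2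
    have hqd2 : (q : ℤ) ∣ (-1 : ℤ) ^ s := by
      have hx : (q : ℤ) ∣ u * q ^ (1 + m) :=
        Dvd.dvd.mul_left (dvd_pow_self _ (by omega)) u
      exact (dvd_add_right hx).mp (by rwa [add_comm] at hqd)
    have hfin : q ∣ ((-1 : ℤ) ^ s).natAbs := Int.natAbs_dvd_natAbs.mpr hqd2
    have hq1 : q = 1 := by simpa [Int.natAbs_pow] using hfin
    exact hq.one_lt.ne' hq1
end

section
/- Consider the 4-periodic sequence A = 1, 3, 5, 3, 1, 3, 5, 3, ... over Z_6. Then A does not contain two consecutive blocks B_1, B_2 of equal length l ≥ 2 such that for each j ∈ {1,2}, either (sum of B_j) + (product of B_j) = 0 or (sum of B_j) - (product of B_j) = 0 in Z_6. -/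
theorem stmt_18 (A : ℕ → ZMod 6)
    (hA : ∀ k, A k = if k % 4 = 0 then 1 else if k % 4 = 2 then 5 else 3) :
    ¬ ∃ s l : ℕ, 2 ≤ l ∧
      (((∑ i ∈ Finset.range l, A (s + i)) + (∏ i ∈ Finset.range l, A (s + i)) = 0 ∨
        (∑ i ∈ Finset.range l, A (s + i)) - (∏ i ∈ Finset.range l, A (s + i)) = 0) ∧
       ((∑ i ∈ Finset.range l, A (s + l + i)) + (∏ i ∈ Finset.range l, A (s + l + i)) = 0 ∨
        (∑ i ∈ Finset.range l, A (s + l + i)) - (∏ i ∈ Finset.range l, A (s + l + i)) = 0)) := by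
  rintro ⟨s, l, hl, h1, h2⟩
  have h6 : (6 : ZMod 6) = 0 := by decide
  -- a key ZMod 6 fact
  have key : ∀ x : ZMod 6,
      (ZMod.castHom (show (2:ℕ) ∣ 6 by norm_num) (ZMod 2)) x = 1 →
      (ZMod.castHom (show (3:ℕ) ∣ 6 by norm_num) (ZMod 3)) x = 0 → x = 3 := by decide
  have hAval : ∀ k, A k = 1 ∨ A k = 3 ∨ A k = 5 := by
    intro k; rw [hA k]; split_ifs <;> simp
  have hA3 : ∀ k, k % 2 = 1 → A k = 3 := by
    intro k hk
    rw [hA k, if_neg (by omega), if_neg (by omega)]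
  -- every block of length l has product 3
  have hprod : ∀ t, (∏ i ∈ Finset.range l, A (t + i)) = 3 := by
    intro t
    apply key
    · rw [map_prod]
      apply Finset.prod_eq_one
      intro i _
      rcases hAval (t + i) with h | h | h <;> rw [h] <;> decide
    · rw [map_prod]
      obtain ⟨i, hi, hodd⟩ : ∃ i, i ∈ Finset.range l ∧ (t + i) % 2 = 1 := by
        rcases Nat.mod_two_eq_zero_or_one t with h | h
        · exact ⟨1, Finset.mem_range.mpr (by omega), by omega⟩
        · exact ⟨0, Finset.mem_range.mpr (by omega), by omega⟩
      apply Finset.prod_eq_zero hi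
      rw [hA3 _ hodd]; decide
  -- hence each block sum is 3
  have hs1 : (∑ i ∈ Finset.range l, A (s + i)) = 3 := by
    rcases h1 with h | h <;> rw [hprod s] at h
    · linear_combination h - h6
    · linear_combination h
  have hs2 : (∑ i ∈ Finset.range l, A (s + l + i)) = 3 := by
    rcases h2 with h | h <;> rw [hprod (s + l)] at h
    · linear_combination h - h6
    · linear_combination h
  -- sum of any 4 consecutive terms is 0
  have sum4 : ∀ k, A k + A (k + 1) + A (k + 2) + A (k + 3) = 0 := by
    intro k
    rw [hA k, hA (k + 1), hA (k + 2), hA (k + 3),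
      Nat.add_mod k 1 4, Nat.add_mod k 2 4, Nat.add_mod k 3 4]
    have h : k % 4 = 0 ∨ k % 4 = 1 ∨ k % 4 = 2 ∨ k % 4 = 3 := by omega
    rcases h with h | h | h | h <;> rw [h] <;> decide
  have hshift4 : ∀ t m, (∑ i ∈ Finset.range (m + 4), A (t + i)) =
      ∑ i ∈ Finset.range m, A (t + i) := by
    intro t m
    rw [Finset.sum_range_succ, Finset.sum_range_succ, Finset.sum_range_succ,
      Finset.sum_range_succ]
    have e1 : t + (m + 1) = (t + m) + 1 := by ring
    have e2 : t + (m + 2) = (t + m) + 2 := by ring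
    have e3 : t + (m + 3) = (t + m) + 3 := by ring
    rw [e1, e2, e3]
    linear_combination sum4 (t + m)
  have haux : ∀ q m t, (∑ i ∈ Finset.range (m + 4 * q), A (t + i)) =
      ∑ i ∈ Finset.range m, A (t + i) := by
    intro q
    induction q with
    | zero => simp
    | succ n ih =>
      intro m t
      have e : m + 4 * (n + 1) = (m + 4 * n) + 4 := by ring
      rw [e, hshift4, ih]
  have hAmod : ∀ k, A k = A (k % 4) := by
    intro k
    rw [hA k, hA (k % 4)]
    have e : k % 4 % 4 = k % 4 := by omega
    rw [e]
  have hAeq : ∀ t i, A (t + i) = A (t % 4 + i) := by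
    intro t i
    rw [hAmod (t + i), hAmod (t % 4 + i)]
    congr 1
    omega
  have hred : ∀ t, (∑ i ∈ Finset.range l, A (t + i)) =
      ∑ i ∈ Finset.range (l % 4), A (t % 4 + i) := by
    intro t
    have e : l = l % 4 + 4 * (l / 4) := by omega
    rw [show (∑ i ∈ Finset.range l, A (t + i)) =
        ∑ i ∈ Finset.range (l % 4 + 4 * (l / 4)), A (t + i) by rw [← e],
      haux]
    exact Finset.sum_congr rfl fun i _ => hAeq t i
  rw [hred] at hs1 hs2
  have hc : (s + l) % 4 = (s % 4 + l % 4) % 4 := by omega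
  rw [hc] at hs2
  -- precompute values of A on small arguments
  have v0 : A 0 = 1 := by rw [hA]; norm_num
  have v1 : A 1 = 3 := by rw [hA]; norm_num
  have v2 : A 2 = 5 := by rw [hA]; norm_num
  have v3 : A 3 = 3 := by rw [hA]; norm_num
  have v4 : A 4 = 1 := by rw [hA]; norm_num
  have v5 : A 5 = 3 := by rw [hA]; norm_num
  have v6 : A 6 = 5 := by rw [hA]; norm_num
  have ea : s % 4 = 0 ∨ s % 4 = 1 ∨ s % 4 = 2 ∨ s % 4 = 3 := by omega
  have eb : l % 4 = 0 ∨ l % 4 = 1 ∨ l % 4 = 2 ∨ l % 4 = 3 := by omega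
  rcases ea with ha | ha | ha | ha <;> rcases eb with hb | hb | hb | hb <;>
    rw [ha, hb] at hs1 hs2 <;>
    simp only [Finset.sum_range_succ, Finset.sum_range_zero, Nat.reduceAdd,
      Nat.reduceMod, Nat.add_zero, Nat.zero_add, zero_add, v0, v1, v2, v3, v4, v5, v6] at hs1 hs2 <;>
    first
      | exact absurd hs1 (by decide)
      | exact absurd hs2 (by decide)
end
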